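/- Every consistent first-order theory in a countable signature has a model whose domain is a set, together with a full satisfaction relation (Henkin completeness theorem, formulated so as to be provable without the axiom of infinity by taking the model's individuals to be terms of an expanded language). -/

import Mathlib

/-!
Henkin's construction. Enumerate all formulas with free variables in `ℕ` and decide them one
at a time over `Θ`, keeping the set consistent; whenever `¬ ∀ f` is accepted, also accept
`¬ f(k)` for a variable `k` not occurring so far. Since `Θ` consists of sentences, the variables
themselves serve as Henkin constants. The resulting set `Δ` is consistent, complete and has
witnesses, so the terms modulo `Δ`-provable equality form a structure satisfying, under the
assignment `i ↦ [i]`, exactly the formulas of `Δ`. This term model is countable, hence can be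
moved into `Type`, and the truth of a sentence does not depend on the assignment.
-/

open FirstOrder FirstOrder.Language

namespace PaperSat

variable {L : Language} {α : Type*}

/-- A formula in context: a bounded formula together with its number of bound variables. -/
abbrev Fml (L : Language) (α : Type*) : Type _ := Σ n, L.BoundedFormula α n

/-- `Sub φ ψ` means that `φ` is a subformula (or subexpression) of `ψ`. -/
inductive Sub {L : Language} {α : Type*} : Fml L α → Fml L α → Prop
  | refl (φ : Fml L α) : Sub φ φ
  | impLeft {φ : Fml L α} {n : ℕ} (f g : L.BoundedFormula α n) :
      Sub φ ⟨n, f⟩ → Sub φ ⟨n, f.imp g⟩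
  | impRight {φ : Fml L α} {n : ℕ} (f g : L.BoundedFormula α n) :
      Sub φ ⟨n, g⟩ → Sub φ ⟨n, f.imp g⟩
  | allOf {φ : Fml L α} {n : ℕ} (f : L.BoundedFormula α (n + 1)) :
      Sub φ ⟨n + 1, f⟩ → Sub φ ⟨n, f.all⟩

/-- Membership in the subformula closure of a class `Φ` of formulas. -/
def InCl (Φ : Set (Fml L α)) (φ : Fml L α) : Prop := ∃ ψ ∈ Φ, Sub φ ψ

variable (M : Type*) [L.Structure M]

/-- `IsSatRel M Φ T` says that `T` is a `Φ`-satisfaction relation for the structure `M`: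
a relation on pairs consisting of a subformula of a member of `Φ` and an assignment,
satisfying the usual Tarskian recursion clauses. -/
def IsSatRel (Φ : Set (Fml L α))
    (T : ∀ n, L.BoundedFormula α n → (α → M) → (Fin n → M) → Prop) : Prop :=
  (∀ (n : ℕ) (v : α → M) (xs : Fin n → M), InCl Φ ⟨n, BoundedFormula.falsum⟩ →
      ¬ T n BoundedFormula.falsum v xs) ∧
  (∀ (n : ℕ) (t₁ t₂ : L.Term (α ⊕ Fin n)) (v : α → M) (xs : Fin n → M),
      InCl Φ ⟨n, t₁.bdEqual t₂⟩ →
      (T n (t₁.bdEqual t₂) v xs ↔ t₁.realize (Sum.elim v xs) = t₂.realize (Sum.elim v xs))) ∧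
  (∀ (n l : ℕ) (R : L.Relations l) (ts : Fin l → L.Term (α ⊕ Fin n)) (v : α → M)
      (xs : Fin n → M), InCl Φ ⟨n, BoundedFormula.rel R ts⟩ →
      (T n (BoundedFormula.rel R ts) v xs ↔
        Structure.RelMap R fun i => (ts i).realize (Sum.elim v xs))) ∧
  (∀ (n : ℕ) (f g : L.BoundedFormula α n) (v : α → M) (xs : Fin n → M),
      InCl Φ ⟨n, f.imp g⟩ → (T n (f.imp g) v xs ↔ (T n f v xs → T n g v xs))) ∧
  (∀ (n : ℕ) (f : L.BoundedFormula α (n + 1)) (v : α → M) (xs : Fin n → M),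
      InCl Φ ⟨n, f.all⟩ → (T n f.all v xs ↔ ∀ x : M, T (n + 1) f v (Fin.snoc xs x)))

end PaperSat

namespace PaperLK

open FirstOrder FirstOrder.Language

variable {L : Language}

/-- Instantiation of the bound variable of a formula with one extra bound variable
by a term with free variables in `ℕ`. -/
def inst1 (f : L.BoundedFormula ℕ 1) (t : L.Term ℕ) : L.Formula ℕ :=
  f.toFormula.subst (Sum.elim Term.var fun _ => t)

/-- The equality formula between two terms, as a formula with free variables in `ℕ`. -/
def eqT (t u : L.Term ℕ) : L.Formula ℕ :=
  (t.relabel Sum.inl).bdEqual (u.relabel Sum.inl)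

/-- Gentzen's sequent calculus `LK` for classical first-order logic, on sequents of formulas
with free variables in `ℕ`.  The boolean parameter `cut` controls whether the cut rule is
available (`LK false eq` is the cut-free calculus `LK⁻`), and the boolean parameter `eq`
controls whether the rules for the identity predicate are available (`eq = false` gives logic
without identity). -/
inductive LK (cut eq : Bool) : List (L.Formula ℕ) → List (L.Formula ℕ) → Prop
  | ax (φ : L.Formula ℕ) : LK cut eq [φ] [φ]
  | falsumL : LK cut eq [⊥] []
  | wL {Γ Δ} (φ) : LK cut eq Γ Δ → LK cut eq (φ :: Γ) Δ
  | wR {Γ Δ} (φ) : LK cut eq Γ Δ → LK cut eq Γ (Δ ++ [φ])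
  | cL {Γ Δ} {φ} : LK cut eq (φ :: φ :: Γ) Δ → LK cut eq (φ :: Γ) Δ
  | cR {Γ Δ} {φ} : LK cut eq Γ (Δ ++ [φ, φ]) → LK cut eq Γ (Δ ++ [φ])
  | eL {Γ₁ Γ₂ Δ} {φ ψ} : LK cut eq (Γ₁ ++ φ :: ψ :: Γ₂) Δ → LK cut eq (Γ₁ ++ ψ :: φ :: Γ₂) Δ
  | eR {Γ Δ₁ Δ₂} {φ ψ} : LK cut eq Γ (Δ₁ ++ φ :: ψ :: Δ₂) → LK cut eq Γ (Δ₁ ++ ψ :: φ :: Δ₂)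
  | impL {Γ Γ' Δ Δ'} {f g : L.Formula ℕ} :
      LK cut eq Γ (Δ ++ [f]) → LK cut eq (g :: Γ') Δ' →
      LK cut eq ((f.imp g) :: (Γ ++ Γ')) (Δ ++ Δ')
  | impR {Γ Δ} {f g : L.Formula ℕ} :
      LK cut eq (f :: Γ) (Δ ++ [g]) → LK cut eq Γ (Δ ++ [f.imp g])
  | allL {Γ Δ} {f : L.BoundedFormula ℕ 1} (t : L.Term ℕ) :
      LK cut eq ((inst1 f t) :: Γ) Δ → LK cut eq ((BoundedFormula.all f) :: Γ) Δ
  | allR {Γ Δ} {f : L.BoundedFormula ℕ 1} (k : ℕ)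
      (hfresh : ∀ ψ ∈ (BoundedFormula.all f) :: (Γ ++ Δ), k ∉ ψ.freeVarFinset) :
      LK cut eq Γ (Δ ++ [inst1 f (Term.var k)]) →
      LK cut eq Γ (Δ ++ [BoundedFormula.all f])
  | cut' {Γ Γ' Δ Δ'} {φ : L.Formula ℕ} (hc : cut = true) :
      LK cut eq Γ (Δ ++ [φ]) → LK cut eq (φ :: Γ') Δ' → LK cut eq (Γ ++ Γ') (Δ ++ Δ')
  | eqRefl (he : eq = true) (t : L.Term ℕ) : LK cut eq [] [eqT t t]
  | eqSubst {Γ Δ} {f : L.BoundedFormula ℕ 1} (he : eq = true) (t u : L.Term ℕ) :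
      LK cut eq Γ (Δ ++ [inst1 f t]) → LK cut eq ((eqT t u) :: Γ) (Δ ++ [inst1 f u])

/-- Provability of a formula from a theory (a class of formulas), via the full sequent
calculus (with cut and with the rules for identity). -/
def ThmOf (Θ : Set (L.Formula ℕ)) (σ : L.Formula ℕ) : Prop :=
  ∃ Γ : List (L.Formula ℕ), (∀ γ ∈ Γ, γ ∈ Θ) ∧ LK true true Γ [σ]

/-- A formula is a sentence if it has no free variables. -/
def ClosedF (φ : L.Formula ℕ) : Prop := φ.freeVarFinset = ∅

/-- A theory is consistent if there is no sentence such that both it and its negation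
are provable. -/
def ConsistentT (Θ : Set (L.Formula ℕ)) : Prop :=
  ¬ ∃ σ : L.Formula ℕ, ClosedF σ ∧ ThmOf Θ σ ∧ ThmOf Θ σ.not

/-- The class of formulas not containing the identity predicate. -/
inductive EqFree : ∀ {n : ℕ}, L.BoundedFormula ℕ n → Prop
  | falsum {n} : EqFree (n := n) BoundedFormula.falsum
  | rel {n l} (R : L.Relations l) (ts : Fin l → L.Term (ℕ ⊕ Fin n)) :
      EqFree (BoundedFormula.rel R ts)
  | imp {n} {f g : L.BoundedFormula ℕ n} : EqFree f → EqFree g → EqFree (f.imp g)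
  | all {n} {f : L.BoundedFormula ℕ (n + 1)} : EqFree f → EqFree (BoundedFormula.all f)

end PaperLK

namespace PaperLK

variable {L : Language}

section Sequents

variable {c e : Bool} {Γ Γ' Δ : List (L.Formula ℕ)}

theorem LK.append_perm_left (p : Γ.Perm Γ') :
    ∀ {pre : List (L.Formula ℕ)}, LK c e (pre ++ Γ) Δ → LK c e (pre ++ Γ') Δ := by
  induction p with
  | nil => exact id
  | cons a _ ih =>
    intro pre h
    simpa using ih (pre := pre ++ [a]) (by simpa using h)
  | swap x y l => exact LK.eL
  | trans _ _ ih₁ ih₂ => exact ih₂ ∘ ih₁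

theorem LK.perm_left (h : LK c e Γ Δ) (p : Γ.Perm Γ') : LK c e Γ' Δ :=
  LK.append_perm_left p (pre := []) h

theorem LK.append_left (h : LK c e Γ Δ) (pre : List (L.Formula ℕ)) : LK c e (pre ++ Γ) Δ := by
  induction pre with
  | nil => exact h
  | cons a _ ih => exact LK.wL a ih

theorem LK.mono_left (h : LK c e Γ Δ) (hs : Γ ⊆ Γ') : LK c e Γ' Δ := by
  -- weaken by `Γ'`, then contract each formula of `Γ` into its copy in `Γ'`
  suffices ∀ Γ₀ : List (L.Formula ℕ), LK c e (Γ' ++ Γ₀) Δ → Γ₀ ⊆ Γ' → LK c e Γ' Δ from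
    this Γ (h.append_left Γ') hs
  classical
  intro Γ₀
  induction Γ₀ with
  | nil => exact fun h _ => by simpa using h
  | cons a t ih =>
    intro h hs
    have p : (Γ' ++ t).Perm (a :: (Γ'.erase a ++ t)) :=
      (List.perm_cons_erase (hs List.mem_cons_self)).append_right t
    have h₂ : LK c e (a :: a :: (Γ'.erase a ++ t)) Δ :=
      h.perm_left (List.perm_middle.trans (p.cons a))
    exact ih (h₂.cL.perm_left p.symm) fun x hx => hs (List.mem_cons_of_mem a hx)

theorem LK.modusPonens (f g : L.Formula ℕ) : LK c e [f.imp g, f] [g] := by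
  simpa using LK.impL (Γ := [f]) (Δ := []) (by simpa using LK.ax f) (LK.ax g)

theorem LK.not_not_elim (φ : L.Formula ℕ) : LK c e [φ.not.not] [φ] := by
  have h : LK c e [] ([φ] ++ [φ.not]) := LK.impR (LK.wR ⊥ (LK.ax φ))
  simpa [BoundedFormula.not] using LK.impL h LK.falsumL

theorem LK.imp_intro_right (f g : L.Formula ℕ) : LK c e [g] [f.imp g] := by
  simpa using LK.impR (Δ := []) (LK.wL f (LK.ax g))

theorem LK.imp_intro_not (f g : L.Formula ℕ) : LK c e [f.not] [f.imp g] := by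
  have h : LK c e [f.not, f] [g] := by
    simpa [BoundedFormula.not] using
      LK.wR g (LK.impL (Γ := [f]) (Δ := []) (by simpa using LK.ax f) LK.falsumL)
  simpa using LK.impR (Δ := []) (LK.eL (Γ₁ := []) h)

theorem LK.not_bot : LK c e [] [(⊥ : L.Formula ℕ).not] := by
  simpa [BoundedFormula.not] using LK.impR (Δ := []) (LK.ax ⊥)

end Sequents

section Provability

variable {S : Set (L.Formula ℕ)} {φ ψ : L.Formula ℕ}

theorem ThmOf.of_mem (h : φ ∈ S) : ThmOf S φ :=
  ⟨[φ], by simpa using h, LK.ax φ⟩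

theorem ThmOf.of_LK {Γ : List (L.Formula ℕ)} (hΓ : ∀ γ ∈ Γ, ThmOf S γ)
    (h : LK true true Γ [φ]) : ThmOf S φ := by
  suffices ∀ Γ₀ : List (L.Formula ℕ), (∀ γ ∈ Γ₀, γ ∈ S) → LK true true (Γ ++ Γ₀) [φ] →
      ThmOf S φ from this [] (by simp) (by simpa using h)
  clear h
  induction Γ with
  | nil => exact fun Γ₀ hΓ₀ h => ⟨Γ₀, hΓ₀, h⟩
  | cons γ Γ ih =>
    intro Γ₀ hΓ₀ h
    obtain ⟨Γ₁, hΓ₁, h₁⟩ := hΓ γ List.mem_cons_self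
    have hcut : LK true true (Γ₁ ++ (Γ ++ Γ₀)) ([] ++ [φ]) :=
      LK.cut' rfl (by simpa using h₁) h
    refine ih (fun γ' h' => hΓ γ' (List.mem_cons_of_mem γ h')) (Γ₁ ++ Γ₀) ?_
      (hcut.mono_left fun x => ?_)
    · simp only [List.mem_append]
      exact fun x hx => hx.elim (hΓ₁ x) (hΓ₀ x)
    · simp only [List.mem_append]
      tauto

theorem ThmOf.mp (h₁ : ThmOf S (φ.imp ψ)) (h₂ : ThmOf S φ) : ThmOf S ψ :=
  ThmOf.of_LK (by simp [h₁, h₂]) (LK.modusPonens φ ψ)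

theorem ThmOf.of_not_not (h : ThmOf S φ.not.not) : ThmOf S φ :=
  ThmOf.of_LK (by simp [h]) (LK.not_not_elim φ)

theorem ThmOf.imp_of_insert (h : ThmOf (insert φ S) ψ) : ThmOf S (φ.imp ψ) := by
  classical
  obtain ⟨Γ, hΓ, hL⟩ := h
  refine ⟨Γ.filter (· ∈ S), by simp, ?_⟩
  have h' : LK true true (φ :: Γ.filter (· ∈ S)) ([] ++ [ψ]) := by
    refine LK.mono_left (by simpa using hL) fun x hx => ?_
    rcases hΓ x hx with rfl | hS
    · exact List.mem_cons_self
    · exact List.mem_cons_of_mem φ (List.mem_filter.2 ⟨hx, by simpa using hS⟩)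
  simpa using LK.impR h'

end Provability

def Consistent (S : Set (L.Formula ℕ)) : Prop := ¬ ThmOf S ⊥

section Consistency

variable {S : Set (L.Formula ℕ)} {φ : L.Formula ℕ}

theorem ConsistentT.consistent (h : ConsistentT S) : Consistent S :=
  fun hbot => h ⟨⊥, rfl, hbot, ⟨[], by simp, LK.not_bot⟩⟩

theorem Consistent.not_mem_not (h : Consistent S) (hφ : φ ∈ S) : φ.not ∉ S :=
  fun hn => h ((ThmOf.of_mem hn).mp (ThmOf.of_mem hφ))

theorem Consistent.insert_or_insert_not (h : Consistent S) (φ : L.Formula ℕ) :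
    Consistent (insert φ S) ∨ Consistent (insert φ.not S) := by
  by_contra! hc
  obtain ⟨h₁, h₂⟩ := hc
  exact h ((not_not.1 h₂).imp_of_insert.mp (not_not.1 h₁).imp_of_insert)

theorem Consistent.insert_witness {f : L.BoundedFormula ℕ 1} {k : ℕ}
    (h : Consistent (insert f.all.not S))
    (hk : ∀ ψ ∈ insert f.all.not S, k ∉ ψ.freeVarFinset) :
    Consistent (insert (inst1 f (Term.var k)).not (insert f.all.not S)) := by
  intro hbot
  obtain ⟨Γ, hΓ, hL⟩ := hbot.imp_of_insert.of_not_not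
  have hfresh : ∀ ψ ∈ f.all :: (Γ ++ []), k ∉ ψ.freeVarFinset := by
    simp only [List.append_nil, List.mem_cons]
    rintro ψ (rfl | hψ)
    · simpa [BoundedFormula.not] using hk _ (Set.mem_insert _ _)
    · exact hk ψ (hΓ ψ hψ)
  have hall : ThmOf (insert f.all.not S) f.all :=
    ⟨Γ, hΓ, by simpa using LK.allR k hfresh (by simpa using hL)⟩
  exact h ((ThmOf.of_mem (Set.mem_insert _ _)).mp hall)

end Consistency

def freshVar (l : List (L.Formula ℕ)) : ℕ :=
  (l.map fun ψ => ψ.freeVarFinset.sup id + 1).sum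

theorem freshVar_not_mem_freeVarFinset {l : List (L.Formula ℕ)} {ψ : L.Formula ℕ}
    (hψ : ψ ∈ l) : freshVar l ∉ ψ.freeVarFinset := fun hk => by
  have h₁ : freshVar l ≤ ψ.freeVarFinset.sup id := Finset.le_sup (f := id) hk
  have h₂ : ψ.freeVarFinset.sup id + 1 ≤ freshVar l :=
    List.le_sum_of_mem (List.mem_map_of_mem hψ)
  omega

/-- The pattern `.imp (.all f) .falsum` is `f.all.not`. -/
def henkinWitnesses (k : ℕ) : L.Formula ℕ → List (L.Formula ℕ)
  | .imp (.all f) .falsum => [(inst1 f (Term.var k)).not]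
  | _ => []

theorem Consistent.union_henkinWitnesses {S : Set (L.Formula ℕ)} {φ : L.Formula ℕ} {k : ℕ}
    (h : Consistent (insert φ S)) (hk : ∀ ψ ∈ insert φ S, k ∉ ψ.freeVarFinset) :
    Consistent ({ψ | ψ ∈ henkinWitnesses k φ} ∪ insert φ S) := by
  unfold henkinWitnesses
  split
  · simp only [List.mem_singleton, Set.ofPred_eq_eq_singleton, Set.singleton_union]
    exact h.insert_witness hk
  · simpa using h

structure IsHenkinMaximal (Δ : Set (L.Formula ℕ)) : Prop where
  consistent : Consistent Δ
  mem_or_not_mem : ∀ φ : L.Formula ℕ, φ ∈ Δ ∨ φ.not ∈ Δ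
  exists_witness : ∀ f : L.BoundedFormula ℕ 1, f.all.not ∈ Δ →
    ∃ k : ℕ, (inst1 f (Term.var k)).not ∈ Δ

section Lindenbaum

variable (Θ : Set (L.Formula ℕ)) (e : ℕ → L.Formula ℕ)

open Classical in
noncomputable def extendStep (l : List (L.Formula ℕ)) (φ : L.Formula ℕ) : List (L.Formula ℕ) :=
  if Consistent (insert φ (Θ ∪ {ψ | ψ ∈ l})) then
    φ :: (henkinWitnesses (freshVar (φ :: l)) φ ++ l)
  else φ.not :: l

noncomputable def stage : ℕ → List (L.Formula ℕ)
  | 0 => []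
  | n + 1 => extendStep Θ (stage n) (e n)

def lindenbaum : Set (L.Formula ℕ) := ⋃ n, Θ ∪ {ψ | ψ ∈ stage Θ e n}

variable {Θ e}

theorem consistent_extendStep (hΘ : ∀ θ ∈ Θ, ClosedF θ) {l : List (L.Formula ℕ)}
    (h : Consistent (Θ ∪ {ψ | ψ ∈ l})) (φ : L.Formula ℕ) :
    Consistent (Θ ∪ {ψ | ψ ∈ extendStep Θ l φ}) := by
  unfold extendStep
  split_ifs with hφ
  · have hk : ∀ ψ ∈ insert φ (Θ ∪ {ψ | ψ ∈ l}), freshVar (φ :: l) ∉ ψ.freeVarFinset := by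
      rintro ψ (rfl | hψ | hψ)
      · exact freshVar_not_mem_freeVarFinset List.mem_cons_self
      · rw [show ψ.freeVarFinset = ∅ from hΘ ψ hψ]
        exact Finset.notMem_empty _
      · exact freshVar_not_mem_freeVarFinset (List.mem_cons_of_mem φ hψ)
    convert hφ.union_henkinWitnesses hk using 1
    ext ψ
    simp only [Set.mem_union, Set.mem_insert_iff, Set.mem_ofPred_eq, List.mem_cons,
      List.mem_append]
    tauto
  · convert (h.insert_or_insert_not φ).resolve_left hφ using 1
    ext ψ
    simp only [Set.mem_union, Set.mem_insert_iff, Set.mem_ofPred_eq, List.mem_cons]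
    tauto

theorem stage_subset_succ (n : ℕ) : stage Θ e n ⊆ stage Θ e (n + 1) := by
  simp only [stage, extendStep]
  split_ifs <;> intro ψ hψ <;> simp [hψ]

theorem consistent_stage (hΘc : ∀ θ ∈ Θ, ClosedF θ) (hΘ : Consistent Θ) (n : ℕ) :
    Consistent (Θ ∪ {ψ | ψ ∈ stage Θ e n}) := by
  induction n with
  | zero => simpa [stage] using hΘ
  | succ n ih => exact consistent_extendStep hΘc ih (e n)

theorem consistent_lindenbaum (hΘc : ∀ θ ∈ Θ, ClosedF θ) (hΘ : Consistent Θ) :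
    Consistent (lindenbaum Θ e) := by
  classical
  rintro ⟨Γ, hΓ, h⟩
  have hmono : Monotone fun n => Θ ∪ {ψ | ψ ∈ stage Θ e n} :=
    monotone_nat_of_le_succ fun n => Set.union_subset_union_right Θ (stage_subset_succ n)
  obtain ⟨n, hn⟩ := hmono.directed_le.exists_mem_subset_of_finset_subset_biUnion
    (s := Γ.toFinset) fun γ hγ => hΓ γ (by simpa using hγ)
  exact consistent_stage hΘc hΘ n ⟨Γ, fun γ hγ => hn (by simpa using hγ), h⟩

theorem mem_or_not_mem_lindenbaum (he : Function.Surjective e) (φ : L.Formula ℕ) :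
    φ ∈ lindenbaum Θ e ∨ φ.not ∈ lindenbaum Θ e := by
  obtain ⟨n, rfl⟩ := he φ
  have : e n ∈ stage Θ e (n + 1) ∨ (e n).not ∈ stage Θ e (n + 1) := by
    simp only [stage, extendStep]
    split_ifs <;> simp
  exact this.imp (fun h => Set.mem_iUnion.2 ⟨n + 1, Or.inr h⟩)
    (fun h => Set.mem_iUnion.2 ⟨n + 1, Or.inr h⟩)

theorem exists_witness_mem_lindenbaum (hΘc : ∀ θ ∈ Θ, ClosedF θ) (hΘ : Consistent Θ)
    (he : Function.Surjective e) {f : L.BoundedFormula ℕ 1} (h : f.all.not ∈ lindenbaum Θ e) :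
    ∃ k, (inst1 f (Term.var k)).not ∈ lindenbaum Θ e := by
  obtain ⟨n, hn⟩ := he f.all.not
  by_cases hφ : Consistent (insert (e n) (Θ ∪ {ψ | ψ ∈ stage Θ e n}))
  · refine ⟨freshVar (e n :: stage Θ e n), Set.mem_iUnion.2 ⟨n + 1, Or.inr ?_⟩⟩
    simp only [Set.mem_ofPred_eq, stage, extendStep, if_pos hφ]
    rw [hn]
    simp [henkinWitnesses]
  · refine absurd (Set.mem_iUnion.2 ⟨n + 1, Or.inr ?_⟩)
      ((consistent_lindenbaum hΘc hΘ).not_mem_not h)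
    simp [stage, extendStep, if_neg hφ, hn]

theorem exists_superset_isHenkinMaximal [Countable (Σ l, L.Functions l)]
    [Countable (Σ l, L.Relations l)] (hΘc : ∀ θ ∈ Θ, ClosedF θ) (hΘ : Consistent Θ) :
    ∃ Δ, Θ ⊆ Δ ∧ IsHenkinMaximal Δ := by
  obtain ⟨e, he⟩ := exists_surjective_nat (L.Formula ℕ)
  exact ⟨lindenbaum Θ e, fun θ hθ => Set.mem_iUnion.2 ⟨0, Or.inl hθ⟩,
    consistent_lindenbaum hΘc hΘ, mem_or_not_mem_lindenbaum he,
    fun _ => exists_witness_mem_lindenbaum hΘc hΘ he⟩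

end Lindenbaum

section Substitution

theorem Term.subst_relabel {α β γ : Type*} (g : α → β) (σ : β → L.Term γ) (t : L.Term α) :
    (t.relabel g).subst σ = t.subst (σ ∘ g) := by
  induction t with
  | var => rfl
  | func F ts ih => exact congrArg (Term.func F) (funext ih)

theorem Term.relabel_subst {α β γ : Type*} (σ : α → L.Term β) (g : β → γ) (t : L.Term α) :
    (t.subst σ).relabel g = t.subst fun a => (σ a).relabel g := by
  induction t with
  | var => rfl
  | func F ts ih => exact congrArg (Term.func F) (funext ih)

theorem Term.subst_var {α : Type*} (t : L.Term α) : t.subst Term.var = t := by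
  induction t with
  | var => rfl
  | func F ts ih => exact congrArg (Term.func F) (funext ih)

def instTerm (a : L.Term (ℕ ⊕ Fin 1)) (t : L.Term ℕ) : L.Term ℕ :=
  a.subst (Sum.elim Term.var fun _ => t)

@[simp]
theorem instTerm_var_inr (t : L.Term ℕ) : instTerm (Term.var (Sum.inr 0)) t = t := rfl

@[simp]
theorem instTerm_func {l : ℕ} (F : L.Functions l) (ts : Fin l → L.Term (ℕ ⊕ Fin 1))
    (t : L.Term ℕ) : instTerm (Term.func F ts) t = Term.func F fun i => instTerm (ts i) t := rfl

@[simp]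
theorem instTerm_relabel_inl (a t : L.Term ℕ) : instTerm (a.relabel Sum.inl) t = a := by
  rw [instTerm, Term.subst_relabel]
  exact Term.subst_var a

theorem relabel_inl_subst_eq_relabel_instTerm (a : L.Term (ℕ ⊕ Fin 1)) (t : L.Term ℕ) :
    (a.relabel Sum.inl).subst
        (Sum.elim (Term.relabel Sum.inl ∘ Sum.elim Term.var fun _ => t) (Term.var ∘ Sum.inr)) =
      (instTerm a t).relabel (Sum.inl : ℕ → ℕ ⊕ Fin 0) := by
  rw [Term.subst_relabel, instTerm, Term.relabel_subst]
  exact congrArg a.subst (funext fun x => by cases x <;> rfl)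

theorem inst1_bdEqual (a b : L.Term (ℕ ⊕ Fin 1)) (t : L.Term ℕ) :
    inst1 (a.bdEqual b) t = eqT (instTerm a t) (instTerm b t) :=
  congrArg₂ BoundedFormula.equal (relabel_inl_subst_eq_relabel_instTerm a t)
    (relabel_inl_subst_eq_relabel_instTerm b t)

theorem inst1_rel {l : ℕ} (R : L.Relations l) (ts : Fin l → L.Term (ℕ ⊕ Fin 1)) (t : L.Term ℕ) :
    inst1 (BoundedFormula.rel R ts) t = R.formula fun i => instTerm (ts i) t :=
  congrArg (BoundedFormula.rel R) (funext fun i => relabel_inl_subst_eq_relabel_instTerm (ts i) t)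

def holeAt {l : ℕ} (u : Fin l → L.Term ℕ) (i : Fin l) : Fin l → L.Term (ℕ ⊕ Fin 1) :=
  Function.update (fun j => (u j).relabel Sum.inl) i (Term.var (Sum.inr 0))

theorem instTerm_holeAt {l : ℕ} (u : Fin l → L.Term ℕ) (i : Fin l) (t : L.Term ℕ) :
    (fun j => instTerm (holeAt u i j) t) = Function.update u i t := by
  funext j
  simp only [holeAt, Function.apply_update (fun _ a => instTerm a t), instTerm_relabel_inl,
    instTerm_var_inr]

theorem exists_relabel_inl_eq {α : Type*} (t : L.Term (α ⊕ Fin 0)) :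
    ∃ s : L.Term α, s.relabel Sum.inl = t := by
  refine ⟨t.relabel (Sum.elim id Fin.elim0), ?_⟩
  rw [Term.relabel_relabel]
  convert Term.relabel_id t
  funext x
  cases x with
  | inl => rfl
  | inr j => exact j.elim0

end Substitution

theorem of_update_step {ι α : Type*} [Fintype ι] [DecidableEq ι] (r : α → α → Prop)
    {P : (ι → α) → Prop}
    (hP : ∀ u i a b, r a b → P (Function.update u i a) → P (Function.update u i b))
    {v w : ι → α} (h : ∀ i, r (v i) (w i)) (hv : P v) : P w := by
  suffices ∀ s : Finset ι, P fun i => if i ∈ s then w i else v i by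
    simpa using this Finset.univ
  intro s
  induction s using Finset.induction_on with
  | empty => simpa using hv
  | insert a s ha ih =>
    have e₁ : (fun i => if i ∈ s then w i else v i) =
        Function.update (fun i => if i ∈ s then w i else v i) a (v a) := by
      simp [ha]
    have e₂ : (fun i => if i ∈ insert a s then w i else v i) =
        Function.update (fun i => if i ∈ s then w i else v i) a (w a) := by
      funext i
      by_cases hi : i = a <;> simp [hi]
    rw [e₂]
    exact hP _ a _ _ (h a) (e₁ ▸ ih)

namespace IsHenkinMaximal

variable {Δ : Set (L.Formula ℕ)} (hΔ : IsHenkinMaximal Δ) {φ : L.Formula ℕ}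
include hΔ

theorem mem_of_thmOf (h : ThmOf Δ φ) : φ ∈ Δ :=
  (hΔ.mem_or_not_mem φ).resolve_right fun hn => hΔ.consistent ((ThmOf.of_mem hn).mp h)

theorem mem_of_LK {Γ : List (L.Formula ℕ)} (hΓ : ∀ γ ∈ Γ, γ ∈ Δ) (h : LK true true Γ [φ]) :
    φ ∈ Δ :=
  hΔ.mem_of_thmOf (ThmOf.of_LK (fun γ hγ => ThmOf.of_mem (hΓ γ hγ)) h)

theorem not_mem_iff : φ.not ∈ Δ ↔ φ ∉ Δ :=
  ⟨fun hn h => hΔ.consistent.not_mem_not h hn, (hΔ.mem_or_not_mem φ).resolve_left⟩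

theorem bot_not_mem : (⊥ : L.Formula ℕ) ∉ Δ :=
  fun h => hΔ.consistent (ThmOf.of_mem h)

theorem imp_mem_iff {f g : L.Formula ℕ} : f.imp g ∈ Δ ↔ (f ∈ Δ → g ∈ Δ) := by
  refine ⟨fun h hf => hΔ.mem_of_LK (by simp [h, hf]) (LK.modusPonens f g), fun h => ?_⟩
  by_cases hf : f ∈ Δ
  · exact hΔ.mem_of_LK (by simp [h hf]) (LK.imp_intro_right f g)
  · exact hΔ.mem_of_LK (by simp [hΔ.not_mem_iff.2 hf]) (LK.imp_intro_not f g)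

theorem all_mem_iff {f : L.BoundedFormula ℕ 1} : f.all ∈ Δ ↔ ∀ t, inst1 f t ∈ Δ := by
  refine ⟨fun h t => hΔ.mem_of_LK (by simp [h]) (LK.allL t (LK.ax _)), fun h => ?_⟩
  by_contra hall
  obtain ⟨k, hk⟩ := hΔ.exists_witness f (hΔ.not_mem_iff.2 hall)
  exact hΔ.consistent.not_mem_not (h (Term.var k)) hk

theorem eqT_self_mem (t : L.Term ℕ) : eqT t t ∈ Δ :=
  hΔ.mem_of_LK (Γ := []) (by simp) (LK.eqRefl rfl t)

theorem inst1_mem_of_eqT_mem {f : L.BoundedFormula ℕ 1} {t u : L.Term ℕ} (h : eqT t u ∈ Δ)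
    (hf : inst1 f t ∈ Δ) : inst1 f u ∈ Δ :=
  hΔ.mem_of_LK (Γ := [eqT t u, inst1 f t]) (by simp [h, hf])
    (by simpa using LK.eqSubst (Δ := []) rfl t u (LK.ax _))

theorem eqT_symm {t u : L.Term ℕ} (h : eqT t u ∈ Δ) : eqT u t ∈ Δ := by
  have := hΔ.inst1_mem_of_eqT_mem (f := (Term.var (Sum.inr 0)).bdEqual (t.relabel Sum.inl)) h
  simpa [inst1_bdEqual] using this (by simpa [inst1_bdEqual] using hΔ.eqT_self_mem t)

theorem eqT_trans {t u w : L.Term ℕ} (h₁ : eqT t u ∈ Δ) (h₂ : eqT u w ∈ Δ) : eqT t w ∈ Δ := by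
  have := hΔ.inst1_mem_of_eqT_mem (f := (t.relabel Sum.inl).bdEqual (Term.var (Sum.inr 0))) h₂
  simpa [inst1_bdEqual] using this (by simpa [inst1_bdEqual] using h₁)

theorem eqT_func {l : ℕ} (F : L.Functions l) {v w : Fin l → L.Term ℕ}
    (h : ∀ i, eqT (v i) (w i) ∈ Δ) : eqT (Term.func F v) (Term.func F w) ∈ Δ := by
  refine of_update_step (fun a b => eqT a b ∈ Δ)
    (P := fun x => eqT (Term.func F v) (Term.func F x) ∈ Δ) (fun u i a b hab hu => ?_) h
    (hΔ.eqT_self_mem _)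
  have := hΔ.inst1_mem_of_eqT_mem
    (f := ((Term.func F v).relabel Sum.inl).bdEqual (Term.func F (holeAt u i))) hab
  simpa [inst1_bdEqual, instTerm_holeAt] using
    this (by simpa [inst1_bdEqual, instTerm_holeAt] using hu)

theorem formula_mem_of_eqT {l : ℕ} (R : L.Relations l) {v w : Fin l → L.Term ℕ}
    (h : ∀ i, eqT (v i) (w i) ∈ Δ) (hv : R.formula v ∈ Δ) : R.formula w ∈ Δ := by
  refine of_update_step (fun a b => eqT a b ∈ Δ) (P := fun x => R.formula x ∈ Δ)
    (fun u i a b hab hu => ?_) h hv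
  have := hΔ.inst1_mem_of_eqT_mem (f := BoundedFormula.rel R (holeAt u i)) hab
  simpa [inst1_rel, instTerm_holeAt] using
    this (by simpa [inst1_rel, instTerm_holeAt] using hu)

end IsHenkinMaximal

section TermModel

variable {Δ : Set (L.Formula ℕ)} (hΔ : IsHenkinMaximal Δ)

def termSetoid : Setoid (L.Term ℕ) where
  r t u := eqT t u ∈ Δ
  iseqv := ⟨hΔ.eqT_self_mem, hΔ.eqT_symm, hΔ.eqT_trans⟩

instance termPrestructure : L.Prestructure (termSetoid hΔ) where
  toStructure :=
    { funMap := fun F ts => Term.func F ts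
      RelMap := fun R ts => R.formula ts ∈ Δ }
  fun_equiv := fun _ _ h => hΔ.eqT_func _ h
  rel_equiv := fun _ _ h => propext
    ⟨hΔ.formula_mem_of_eqT _ h, hΔ.formula_mem_of_eqT _ fun i => hΔ.eqT_symm (h i)⟩

abbrev TermModel : Type _ := Quotient (termSetoid hΔ)

theorem realize_termModel (t : L.Term ℕ) :
    t.realize (fun i => (⟦Term.var i⟧ : TermModel hΔ)) = ⟦t⟧ := by
  induction t with
  | var => rfl
  | func F ts ih =>
    simp only [Term.realize, ih]
    exact funMap_quotient_mk' _ F ts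

theorem relMap_termModel {l : ℕ} (R : L.Relations l) (ts : Fin l → L.Term ℕ) :
    Structure.RelMap R (fun i => (⟦ts i⟧ : TermModel hΔ)) ↔ R.formula ts ∈ Δ :=
  relMap_quotient_mk' _ R ts

end TermModel

section Depth

variable {α β : Type*}

def depth : ∀ {n : ℕ}, L.BoundedFormula α n → ℕ
  | _, .falsum => 0
  | _, .equal _ _ => 0
  | _, .rel _ _ => 0
  | _, .imp f g => max (depth f) (depth g) + 1
  | _, .all f => depth f + 1

theorem depth_castLE : ∀ {m n : ℕ} (h : m ≤ n) (φ : L.BoundedFormula α m),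
    depth (φ.castLE h) = depth φ
  | _, _, _, .falsum | _, _, _, .equal _ _ | _, _, _, .rel _ _ => rfl
  | _, _, h, .imp f g => by
    simp only [BoundedFormula.castLE, depth, depth_castLE h f, depth_castLE h g]
  | _, _, h, .all f => by simp only [BoundedFormula.castLE, depth, depth_castLE _ f]

theorem depth_mapTermRel {g : ℕ → ℕ} (ft : ∀ n, L.Term (α ⊕ Fin n) → L.Term (β ⊕ Fin (g n)))
    (fr : ∀ n, L.Relations n → L.Relations n)
    (h : ∀ n, L.BoundedFormula β (g (n + 1)) → L.BoundedFormula β (g n + 1))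
    (hh : ∀ n ψ, depth (h n ψ) = depth ψ) :
    ∀ {n : ℕ} (φ : L.BoundedFormula α n), depth (φ.mapTermRel ft fr h) = depth φ
  | _, .falsum | _, .equal _ _ | _, .rel _ _ => rfl
  | _, .imp f g => by
    simp only [BoundedFormula.mapTermRel, depth, depth_mapTermRel ft fr h hh f,
      depth_mapTermRel ft fr h hh g]
  | _, .all f => by
    simp only [BoundedFormula.mapTermRel, depth, hh, depth_mapTermRel ft fr h hh f]

theorem depth_subst {n : ℕ} (φ : L.BoundedFormula α n) (σ : α → L.Term β) :
    depth (φ.subst σ) = depth φ :=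
  depth_mapTermRel (g := id) _ _ (fun _ => id) (fun _ _ => rfl) φ

theorem depth_relabel {n k : ℕ} (g : α → β ⊕ Fin n) (φ : L.BoundedFormula α k) :
    depth (φ.relabel g) = depth φ :=
  depth_mapTermRel _ _ _ (fun _ ψ => depth_castLE _ ψ) φ

theorem depth_toFormula : ∀ {n : ℕ} (φ : L.BoundedFormula α n), depth φ.toFormula = depth φ
  | _, .falsum | _, .equal _ _ | _, .rel _ _ => rfl
  | _, .imp f g => by
    simp only [BoundedFormula.toFormula, depth, depth_toFormula f, depth_toFormula g]
  | _, .all f => by simp only [BoundedFormula.toFormula, depth, depth_relabel, depth_toFormula f]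

theorem depth_inst1 (f : L.BoundedFormula ℕ 1) (t : L.Term ℕ) : depth (inst1 f t) = depth f := by
  rw [inst1, depth_subst, depth_toFormula]

end Depth

section TruthLemma

variable {Δ : Set (L.Formula ℕ)} (hΔ : IsHenkinMaximal Δ)

theorem realize_inst1_termModel (f : L.BoundedFormula ℕ 1) (t : L.Term ℕ) :
    (inst1 f t).Realize (fun i => (⟦Term.var i⟧ : TermModel hΔ)) ↔
      f.Realize (fun i => (⟦Term.var i⟧ : TermModel hΔ)) fun _ => ⟦t⟧ := by
  rw [inst1, Formula.Realize, BoundedFormula.realize_subst, ← Formula.Realize,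
    BoundedFormula.realize_toFormula]
  congr! with x
  exact realize_termModel hΔ _

theorem realize_termModel_iff_mem (φ : L.Formula ℕ) :
    φ.Realize (fun i => (⟦Term.var i⟧ : TermModel hΔ)) ↔ φ ∈ Δ := by
  -- induction on depth: `inst1 f t` is no subformula of `∀ f`, but has the depth of `f`
  induction hd : depth φ using Nat.strong_induction_on generalizing φ with
  | _ d ih =>
  cases φ with
  | falsum => exact iff_of_false id hΔ.bot_not_mem
  | equal t₁ t₂ =>
    obtain ⟨s₁, rfl⟩ := exists_relabel_inl_eq t₁
    obtain ⟨s₂, rfl⟩ := exists_relabel_inl_eq t₂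
    simp only [Formula.Realize, BoundedFormula.Realize, Term.realize_relabel, Sum.elim_comp_inl,
      realize_termModel, Quotient.eq]
    rfl
  | rel R ts =>
    choose ss hss using fun i => exists_relabel_inl_eq (ts i)
    obtain rfl : ts = fun i => (ss i).relabel Sum.inl := funext fun i => (hss i).symm
    simp only [Formula.Realize, BoundedFormula.Realize, Term.realize_relabel, Sum.elim_comp_inl,
      realize_termModel]
    exact relMap_termModel hΔ R ss
  | imp f g =>
    have hf := ih (depth f) (by simp only [depth] at hd; omega) f rfl
    have hg := ih (depth g) (by simp only [depth] at hd; omega) g rfl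
    rw [Formula.realize_imp, hf, hg, hΔ.imp_mem_iff]
  | all f =>
    have hinst : ∀ t, (inst1 f t).Realize (fun i => (⟦Term.var i⟧ : TermModel hΔ)) ↔
        inst1 f t ∈ Δ := fun t =>
      ih (depth f) (by simp only [depth] at hd; omega) _ (depth_inst1 f t)
    rw [Formula.Realize, BoundedFormula.realize_all, hΔ.all_mem_iff, Quotient.forall]
    simp only [Fin.snoc_zero, ← realize_inst1_termModel, hinst]

end TruthLemma

theorem realize_iff_of_freeVarFinset_eq_empty {M α : Type*} [L.Structure M] [DecidableEq α]
    {n : ℕ} {φ : L.BoundedFormula α n} (h : φ.freeVarFinset = ∅) (v w : α → M)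
    (xs : Fin n → M) : φ.Realize v xs ↔ φ.Realize w xs := by
  have hempty (a : φ.freeVarFinset) : False := by simpa [h] using a.2
  exact (BoundedFormula.realize_restrictFreeVar (f := fun a => (hempty a).elim) (v := v) v
    (fun a => (hempty a).elim)).symm.trans
    (BoundedFormula.realize_restrictFreeVar w fun a => (hempty a).elim)

end PaperLK

namespace PaperSat

open PaperLK

theorem isSatRel_realize {L : Language} {α : Type*} (M : Type*) [L.Structure M]
    (Φ : Set (Fml L α)) : IsSatRel M Φ fun n (φ : L.BoundedFormula α n) v xs => φ.Realize v xs :=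
  ⟨fun _ _ _ _ => id, fun _ _ _ _ _ _ => BoundedFormula.realize_bdEqual _ _,
    fun _ _ _ _ _ _ _ => BoundedFormula.realize_rel, fun _ _ _ _ _ _ => BoundedFormula.realize_imp,
    fun _ _ _ _ _ => BoundedFormula.realize_all⟩

/-- (Henkin completeness theorem.)  Every consistent first-order theory in a
countable signature has a model whose domain is a set, together with a full satisfaction
relation in which every sentence of the theory holds. -/
theorem consistent_theory_has_model (L : Language)
    [Countable (Σ l, L.Functions l)] [Countable (Σ l, L.Relations l)]
    (Θ : Set (L.Formula ℕ)) (hΘc : ∀ θ ∈ Θ, ClosedF θ) (hcon : ConsistentT Θ) :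
    ∃ (M : Type) (_ : L.Structure M), Nonempty M ∧
      ∃ T : ∀ n, L.BoundedFormula ℕ n → (ℕ → M) → (Fin n → M) → Prop,
        IsSatRel M Set.univ T ∧
        ∀ σ ∈ Θ, ∀ (v : ℕ → M) (xs : Fin 0 → M), T 0 σ v xs := by
  obtain ⟨Δ, hΘΔ, hΔ⟩ := exists_superset_isHenkinMaximal hΘc hcon.consistent
  -- the term model lives in the universe of `L`; countability shrinks it into `Type`
  let e := equivShrink.{0} (TermModel hΔ)
  let _ : L.Structure (Shrink.{0} (TermModel hΔ)) := e.inducedStructure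
  let g := e.inducedStructureEquiv (L := L)
  let canonical : ℕ → TermModel hΔ := fun i => ⟦Term.var i⟧
  refine ⟨Shrink.{0} (TermModel hΔ), inferInstance, ⟨e (canonical 0)⟩,
    fun n φ v xs => φ.Realize v xs, isSatRel_realize _ _, fun σ hσ v xs => ?_⟩
  have hσ' : σ.Realize canonical := (realize_termModel_iff_mem hΔ σ).2 (hΘΔ hσ)
  show BoundedFormula.Realize σ v xs
  rw [realize_iff_of_freeVarFinset_eq_empty (hΘc σ hσ) v (g ∘ canonical),
    Subsingleton.elim xs default]
  exact (StrongHomClass.realize_formula g σ).2 hσ'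

end PaperSat
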